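/- arXiv:1008.1191 — 2 statements merged into one kernel-verified Lean document; each statement's English description precedes it below -/
import Mathlib

section
/- The deletion-neighborhood filter is lossless: for words q, s with ed(q, s) ≤ d, the sets of subsequences of q obtained by at most d deletions and of subsequences of s obtained by at most d deletions have nonempty intersection. -/
/-!
Follow the recursion defining the edit distance. Along an optimal alignment of `q` and `s`, the
letters matched to equal letters form a common subsequence `r`; every other letter of `q` or of `s`
is deleted, inserted or substituted, and each such step costs one, so both `q` and `s` are at most
`ed q s` letters longer than `r`. Since `R_d` grows with `d`, `r` lies in `R_d(q) ∩ R_d(s)`.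
-/

structure Levenshtein.Cost (α β δ : Type*) where
  delete : α → δ
  insert : β → δ
  substitute : α → β → δ

def Levenshtein.defaultCost {α : Type*} [DecidableEq α] : Levenshtein.Cost α α ℕ where
  delete _ := 1
  insert _ := 1
  substitute a b := if a = b then 0 else 1

def Levenshtein.impl {α β δ : Type*} (C : Levenshtein.Cost α β δ) [AddZeroClass δ] [Min δ]
    (xs : List α) (y : β) (d : {r : List δ // 0 < r.length}) :
    {r : List δ // 0 < r.length} :=
  let ⟨ds, w⟩ := d
  xs.zip (ds.zip ds.tail) |>.foldr
    (init := ⟨[C.insert y + ds.getLast (List.ne_nil_of_length_pos w)], by simp⟩)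
    (fun ⟨x, d₀, d₁⟩ ⟨r, w⟩ =>
      ⟨min (C.delete x + r[0]) (min (C.insert y + d₀) (C.substitute x y + d₁)) :: r, by simp⟩)

/-- The edit distances of each suffix of `xs` to `ys`, longest suffix first. -/
def suffixLevenshtein {α β δ : Type*} (C : Levenshtein.Cost α β δ) [AddZeroClass δ] [Min δ]
    (xs : List α) (ys : List β) : {r : List δ // 0 < r.length} :=
  ys.foldr
    (Levenshtein.impl C xs)
    (xs.foldr (init := ⟨[0], by simp⟩) (fun a ⟨r, w⟩ => ⟨(C.delete a + r[0]) :: r, by simp⟩))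

def levenshtein {α β δ : Type*} (C : Levenshtein.Cost α β δ) [AddZeroClass δ] [Min δ]
    (xs : List α) (ys : List β) : δ :=
  let ⟨r, w⟩ := suffixLevenshtein C xs ys
  r[0]

def ed {α : Type*} [DecidableEq α] (u v : List α) : ℕ :=
  levenshtein Levenshtein.defaultCost u v

/-- `R_d(w)` -/
def resSet {α : Type*} (d : ℕ) (w : List α) : Set (List α) :=
  {r | r.Sublist w ∧ w.length ≤ r.length + d}

namespace Levenshtein

variable {α β δ : Type*} (C : Cost α β δ) [AddZeroClass δ] [Min δ]

theorem exists_suffixLevenshtein_nil_left (ys : List β) :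
    ∃ v, (suffixLevenshtein C [] ys).1 = [v] := by
  induction ys with
  | nil => exact ⟨0, rfl⟩
  | cons y ys ih =>
    obtain ⟨v, hv⟩ := ih
    have e : suffixLevenshtein C [] ys = ⟨[v], by simp⟩ := Subtype.ext hv
    show ∃ v', (impl C [] y (suffixLevenshtein C [] ys)).1 = [v']
    rw [e]
    exact ⟨_, rfl⟩

theorem exists_suffixLevenshtein_cons_left (x : α) (xs : List α) (ys : List β) :
    ∃ v, (suffixLevenshtein C (x :: xs) ys).1 = v :: (suffixLevenshtein C xs ys).1 := by
  induction ys with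
  | nil => exact ⟨_, rfl⟩
  | cons y ys ih =>
    obtain ⟨v, hv⟩ := ih
    -- `impl` pattern-matches on the previous row, so its shape has to be exposed first.
    obtain ⟨d, ds, hds⟩ := List.exists_cons_of_length_pos (suffixLevenshtein C xs ys).2
    have e : suffixLevenshtein C xs ys = ⟨d :: ds, by simp⟩ := Subtype.ext hds
    have e' : suffixLevenshtein C (x :: xs) ys = ⟨v :: d :: ds, by simp⟩ :=
      Subtype.ext (hv.trans (by rw [hds]))
    show ∃ v', (impl C (x :: xs) y (suffixLevenshtein C (x :: xs) ys)).1 =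
      v' :: (impl C xs y (suffixLevenshtein C xs ys)).1
    rw [e, e']
    exact ⟨_, rfl⟩

theorem levenshtein_cons_nil (x : α) (xs : List α) :
    levenshtein C (x :: xs) [] = C.delete x + levenshtein C xs [] := rfl

theorem levenshtein_nil_cons (y : β) (ys : List β) :
    levenshtein C [] (y :: ys) = C.insert y + levenshtein C [] ys := by
  obtain ⟨v, hv⟩ := exists_suffixLevenshtein_nil_left C ys
  have e : suffixLevenshtein C [] ys = ⟨[v], by simp⟩ := Subtype.ext hv
  unfold levenshtein
  rw [show suffixLevenshtein C [] (y :: ys) = impl C [] y (suffixLevenshtein C [] ys) from rfl, e]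
  rfl

theorem levenshtein_cons_cons (x : α) (xs : List α) (y : β) (ys : List β) :
    levenshtein C (x :: xs) (y :: ys) =
      min (C.delete x + levenshtein C xs (y :: ys))
        (min (C.insert y + levenshtein C (x :: xs) ys)
          (C.substitute x y + levenshtein C xs ys)) := by
  obtain ⟨v, hv⟩ := exists_suffixLevenshtein_cons_left C x xs ys
  obtain ⟨d, ds, hds⟩ := List.exists_cons_of_length_pos (suffixLevenshtein C xs ys).2
  have e : suffixLevenshtein C xs ys = ⟨d :: ds, by simp⟩ := Subtype.ext hds
  have e' : suffixLevenshtein C (x :: xs) ys = ⟨v :: d :: ds, by simp⟩ :=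
    Subtype.ext (hv.trans (by rw [hds]))
  unfold levenshtein
  rw [show suffixLevenshtein C (x :: xs) (y :: ys) =
      impl C (x :: xs) y (suffixLevenshtein C (x :: xs) ys) from rfl,
    show suffixLevenshtein C xs (y :: ys) = impl C xs y (suffixLevenshtein C xs ys) from rfl,
    e, e']
  rfl

end Levenshtein

section EditDistance

open Levenshtein

variable {α : Type*} [DecidableEq α]

theorem ed_nil_left (s : List α) : ed [] s = s.length := by
  induction s with
  | nil => rfl
  | cons y ys ih =>
    rw [ed, levenshtein_nil_cons, ← ed, ih, List.length_cons, add_comm]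
    rfl

theorem ed_nil_right (q : List α) : ed q [] = q.length := by
  induction q with
  | nil => rfl
  | cons x xs ih =>
    rw [ed, levenshtein_cons_nil, ← ed, ih, List.length_cons, add_comm]
    rfl

theorem ed_cons_cons (x : α) (xs : List α) (y : α) (ys : List α) :
    ed (x :: xs) (y :: ys) =
      min (ed xs (y :: ys) + 1)
        (min (ed (x :: xs) ys + 1) (ed xs ys + if x = y then 0 else 1)) := by
  simp only [ed, levenshtein_cons_cons, defaultCost, add_comm]

end EditDistance

section DeletionNeighborhood

variable {α : Type*}

theorem resSet_mono {d d' : ℕ} (h : d ≤ d') (w : List α) : resSet d w ⊆ resSet d' w :=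
  fun _ ⟨hsub, hlen⟩ => ⟨hsub, by omega⟩

theorem nil_mem_resSet_iff {d : ℕ} {w : List α} : [] ∈ resSet d w ↔ w.length ≤ d := by
  simp [resSet]

theorem mem_resSet_cons_of_mem {r w : List α} {d : ℕ} (a : α) (h : r ∈ resSet d w) :
    r ∈ resSet (d + 1) (a :: w) :=
  ⟨h.1.cons a, by simp only [List.length_cons]; linarith [h.2]⟩

theorem cons_mem_resSet_cons {r w : List α} {d : ℕ} (a : α) (h : r ∈ resSet d w) :
    a :: r ∈ resSet d (a :: w) :=
  ⟨h.1.cons_cons a, by simp only [List.length_cons]; linarith [h.2]⟩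

theorem resSet_ed_inter_nonempty [DecidableEq α] :
    ∀ q s : List α, (resSet (ed q s) q ∩ resSet (ed q s) s).Nonempty
  | [], s => ⟨[], by simp [nil_mem_resSet_iff, ed_nil_left]⟩
  | x :: xs, [] => ⟨[], by simp [nil_mem_resSet_iff, ed_nil_right]⟩
  | x :: xs, y :: ys => by
    rw [ed_cons_cons]
    let P n := (resSet n (x :: xs) ∩ resSet n (y :: ys)).Nonempty
    refine min_rec' P ?_ (min_rec' P ?_ ?_)
    · obtain ⟨r, hq, hs⟩ := resSet_ed_inter_nonempty xs (y :: ys)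
      exact ⟨r, mem_resSet_cons_of_mem x hq, resSet_mono (Nat.le_succ _) _ hs⟩
    · obtain ⟨r, hq, hs⟩ := resSet_ed_inter_nonempty (x :: xs) ys
      exact ⟨r, resSet_mono (Nat.le_succ _) _ hq, mem_resSet_cons_of_mem y hs⟩
    · obtain ⟨r, hq, hs⟩ := resSet_ed_inter_nonempty xs ys
      split_ifs with hxy
      · subst hxy
        exact ⟨x :: r, cons_mem_resSet_cons x hq, cons_mem_resSet_cons x hs⟩
      · exact ⟨r, mem_resSet_cons_of_mem x hq, mem_resSet_cons_of_mem y hs⟩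

end DeletionNeighborhood

/-- The deletion-neighborhood filter is lossless: if `ed q s ≤ d` then
`R_d(q) ∩ R_d(s)` is nonempty. -/
theorem filter_lossless {α : Type*} [DecidableEq α]
    (q s : List α) (d : ℕ) (hd : ed q s ≤ d) :
    (resSet d q ∩ resSet d s).Nonempty :=
  (resSet_ed_inter_nonempty q s).mono
    (Set.inter_subset_inter (resSet_mono hd q) (resSet_mono hd s))
end

section
/- For a word w of length ℓ, the total number of residuals in the generalized split neighborhood, C(⌈ℓ/2⌉, ⌈d/2⌉) + C(⌊ℓ/2⌋, ⌈d/2⌉), is at most C(ℓ, d) whenever d ≥ 2 and ℓ ≥ 2d (i.e., splitting reduces the number of generated residual strings). -/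
/-! Vandermonde's identity makes `k ↦ C(·, k)` superadditive for `k ≥ 1`, so the two half-word
counts together are at most `C(ℓ, ⌈d/2⌉)`; since `⌈d/2⌉ ≤ d ≤ ℓ/2`, unimodality of the row
`C(ℓ, ·)` then bounds this by `C(ℓ, d)`. -/

open Finset

namespace Nat

theorem choose_le_choose_of_le_of_le_half {n r s : ℕ} (hrs : r ≤ s) (hs : s ≤ n / 2) :
    n.choose r ≤ n.choose s := by
  induction s, hrs using Nat.le_induction with
  | base => rfl
  | succ k _ ih => exact (ih (by omega)).trans (choose_le_succ_of_lt_half_left (by omega))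

theorem choose_add_choose_le_choose_add {a b k : ℕ} (hk : k ≠ 0) :
    a.choose k + b.choose k ≤ (a + b).choose k := by
  have hne : ((k, 0) : ℕ × ℕ) ≠ (0, k) := by simp [hk]
  rw [add_choose_eq]
  calc a.choose k + b.choose k
      = ∑ ij ∈ {(k, 0), (0, k)}, a.choose ij.1 * b.choose ij.2 := by simp [sum_pair hne]
    _ ≤ ∑ ij ∈ antidiagonal k, a.choose ij.1 * b.choose ij.2 :=
        sum_le_sum_of_subset (by simp [insert_subset_iff])

end Nat

/-- Splitting reduces the number of generated residual strings:
`C(⌈ℓ/2⌉, ⌈d/2⌉) + C(⌊ℓ/2⌋, ⌈d/2⌉) ≤ C(ℓ, d)` for `d ≥ 2` and `ℓ ≥ 2d`. -/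
theorem split_residual_count_le (ℓ d : ℕ) (hd : 2 ≤ d) (hl : 2 * d ≤ ℓ) :
    Nat.choose ((ℓ + 1) / 2) ((d + 1) / 2) + Nat.choose (ℓ / 2) ((d + 1) / 2) ≤
      Nat.choose ℓ d := by
  have halves : (ℓ + 1) / 2 + ℓ / 2 = ℓ := by omega
  calc Nat.choose ((ℓ + 1) / 2) ((d + 1) / 2) + Nat.choose (ℓ / 2) ((d + 1) / 2)
      ≤ Nat.choose ((ℓ + 1) / 2 + ℓ / 2) ((d + 1) / 2) :=
        Nat.choose_add_choose_le_choose_add (by omega)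
    _ = Nat.choose ℓ ((d + 1) / 2) := by rw [halves]
    _ ≤ Nat.choose ℓ d := Nat.choose_le_choose_of_le_of_le_half (by omega) (by omega)
end
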